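/- arXiv:2412.14318 — 5 statements merged into one kernel-verified Lean document; each statement's English description precedes it below -/
import Mathlib

section
/- Lemma (Kalman analysis covariance is dominated by the noise covariance). Let Σ be a positive semidefinite self-adjoint operator on H, let R be a symmetric positive definite k×k matrix and ε > 0. Define K := Σ ∘ Hob† ∘ (Hob Σ Hob† + ε²R)⁻¹ and C := (id − K ∘ Hob) Σ. Then ε²R − Hob C Hob† is positive semidefinite; in particular Tr(Hob C Hob†) ≤ ε² · Tr(R). -/
/- Common setting for "Long-time accuracy of ensemble Kalman filters". -/

open MeasureTheory ProbabilityTheory Filter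
open scoped RealInnerProductSpace ENNReal NNReal

noncomputable section

namespace EnKF

variable {H : Type*} [NormedAddCommGroup H] [InnerProductSpace ℝ H] [FiniteDimensional ℝ H]

/-- The outer product `u ⊗ v`, acting as `x ↦ ⟪v, x⟫ • u`. -/
def outer (u v : H) : H →L[ℝ] H := (innerSL ℝ v).smulRight u

/-- Trace of a continuous linear operator. -/
def opTrace (T : H →L[ℝ] H) : ℝ := LinearMap.trace ℝ H T.toLinearMap

variable {k : ℕ}

/-- `P := Hob† ∘ Hob`, the orthogonal projection onto the observed subspace. -/
def Pop (Hob : H →L[ℝ] EuclideanSpace ℝ (Fin k)) : H →L[ℝ] H :=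
  (ContinuousLinearMap.adjoint Hob).comp Hob

/-- The Lyapunov norm `V(u) = (‖u‖² + β‖Pu‖²)^(1/2)`. -/
def Vnorm (Hob : H →L[ℝ] EuclideanSpace ℝ (Fin k)) (β : ℝ) (u : H) : ℝ :=
  Real.sqrt (‖u‖ ^ 2 + β * ‖Pop Hob u‖ ^ 2)

/-- The Kalman gain `K(S) = S Hob† (Hob S Hob† + ε² R)⁻¹`. -/
def kalmanGain (Hob : H →L[ℝ] EuclideanSpace ℝ (Fin k))
    (R : EuclideanSpace ℝ (Fin k) →L[ℝ] EuclideanSpace ℝ (Fin k)) (ε : ℝ)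
    (S : H →L[ℝ] H) : EuclideanSpace ℝ (Fin k) →L[ℝ] H :=
  (S.comp (ContinuousLinearMap.adjoint Hob)).comp
    (Ring.inverse ((Hob.comp (S.comp (ContinuousLinearMap.adjoint Hob))) + ε ^ 2 • R))

/-- The standard Gaussian measure on a finite-dimensional inner product space. -/
def stdGaussian (H : Type*) [NormedAddCommGroup H] [InnerProductSpace ℝ H]
    [FiniteDimensional ℝ H] [MeasurableSpace H] [BorelSpace H] : Measure H :=
  Measure.map (fun x : Fin (Module.finrank ℝ H) → ℝ =>
      ∑ i, x i • (stdOrthonormalBasis ℝ H) i)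
    (Measure.pi fun _ => gaussianReal 0 1)

/-- The Gaussian measure on `H` with mean `m` whose covariance is `S ∘ S` (for `S`
positive self-adjoint): the law of `m + S g` for a standard Gaussian `g`. -/
def gaussianOf [MeasurableSpace H] [BorelSpace H] (m : H) (S : H →L[ℝ] H) : Measure H :=
  Measure.map (fun x => m + S x) (stdGaussian H)

/-- Assumption 1: absorbing ball of radius `r`, local Lipschitz continuity and the
squeezing property for the dynamics `Ψ`, together with the properties of the
`V`-metric projection `Pr` onto the ball. -/
structure Assumption1 (Hob : H →L[ℝ] EuclideanSpace ℝ (Fin k)) (β r : ℝ)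
    (Ψ Pr : H → H) (L α : ℝ) : Prop where
  hHob : Hob.comp (ContinuousLinearMap.adjoint Hob)
      = ContinuousLinearMap.id ℝ (EuclideanSpace ℝ (Fin k))
  hβ : 0 ≤ β
  hr : 0 < r
  hΨB : ∀ u : H, ‖u‖ ≤ r → ‖Ψ u‖ ≤ r
  hL : 0 < L
  hLip : ∀ u v : H, ‖u‖ ≤ r → ‖v‖ ≤ r →
    Vnorm Hob β (Ψ u - Ψ v) ^ 2 ≤ L * Vnorm Hob β (u - v) ^ 2
  hα0 : 0 < α
  hα1 : α < 1
  hSqueeze : ∀ u v : H, ‖u‖ ≤ r → ‖v‖ ≤ r →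
    Vnorm Hob β ((Ψ u - Ψ v) - Pop Hob (Ψ u - Ψ v)) ^ 2 ≤ α * Vnorm Hob β (u - v) ^ 2
  hPrB : ∀ u : H, ‖Pr u‖ ≤ r
  hPrId : ∀ u : H, ‖u‖ ≤ r → Pr u = u
  hPrNonexp : ∀ u v : H, Vnorm Hob β (Pr u - Pr v) ≤ Vnorm Hob β (u - v)

/-- Index type for the collection of all random sources driving the filter:
the initial-ensemble Gaussians, the inflation noises, and the observation noises. -/
abbrev NoiseIdx (N : ℕ) : Type := Fin N ⊕ ((ℕ × Fin N) ⊕ ℕ)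

abbrev noiseType (H : Type) (k N : ℕ) : NoiseIdx N → Type :=
  fun i => match i with
  | .inl _ => H
  | .inr _ => EuclideanSpace ℝ (Fin k)

abbrev noiseMS (H : Type) [MeasurableSpace H] (k N : ℕ) :
    ∀ i : NoiseIdx N, MeasurableSpace (noiseType H k N i) :=
  fun i => match i with
  | .inl _ => ‹MeasurableSpace H›
  | .inr _ => inferInstance

/-- The combined family of random sources, used to state their mutual independence. -/
def noiseFun {Ω : Type*} {H : Type} {k N : ℕ}
    (g : Fin N → Ω → H) (ζ : ℕ → Fin N → Ω → EuclideanSpace ℝ (Fin k))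
    (η : ℕ → Ω → EuclideanSpace ℝ (Fin k)) :
    ∀ i : NoiseIdx N, Ω → noiseType H k N i :=
  fun i => match i with
  | .inl n => g n
  | .inr (.inl p) => ζ p.1 p.2
  | .inr (.inr j) => η j

/-- The σ-algebra generated by the initial ensemble, the inflation noises `ξ_i = √a Hob† ζ_i`
and the observations `y_i = Hob u_i + ε η_i` for `1 ≤ i ≤ j`. -/
def enkfFiltration {Ω : Type*} [MeasurableSpace H] {N : ℕ}
    (Hob : H →L[ℝ] EuclideanSpace ℝ (Fin k)) (u : ℕ → H) (ε : ℝ)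
    (g : Fin N → Ω → H) (ζ : ℕ → Fin N → Ω → EuclideanSpace ℝ (Fin k))
    (η : ℕ → Ω → EuclideanSpace ℝ (Fin k)) (j : ℕ) : MeasurableSpace Ω :=
  (⨆ n : Fin N, MeasurableSpace.comap (g n) ‹MeasurableSpace H›)
  ⊔ (⨆ i ∈ Set.Icc 1 j, ⨆ n : Fin N, MeasurableSpace.comap (ζ i n) inferInstance)
  ⊔ (⨆ i ∈ Set.Icc 1 j, MeasurableSpace.comap (fun ω => Hob (u i) + ε • η i ω) inferInstance)

/-- A realization of the square-root ensemble Kalman filter (Algorithm 1), with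
prediction map `Ψpred` (the true dynamics `Ψ`, or a surrogate `Ψˢ`), ball projection `Pr`,
signal `u`, noise covariance `R`, ensemble size `N`, initial mean/covariance `m0, C0`,
inflation parameter `a` and noise level `ε`, driven by observations
`y_j = Hob (u j) + ε • η_j`. -/
structure EnKFRun {H : Type} [NormedAddCommGroup H] [InnerProductSpace ℝ H]
    [FiniteDimensional ℝ H] [MeasurableSpace H] [BorelSpace H] {k : ℕ}
    (Hob : H →L[ℝ] EuclideanSpace ℝ (Fin k))
    (Ψpred Pr : H → H) (u : ℕ → H)
    (R : EuclideanSpace ℝ (Fin k) →L[ℝ] EuclideanSpace ℝ (Fin k))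
    (N : ℕ) (m0 : H) (C0 : H →L[ℝ] H) (a ε : ℝ)
    (Ω : Type) [MeasurableSpace Ω] (μ : Measure Ω) where
  /-- observation noises -/
  η : ℕ → Ω → EuclideanSpace ℝ (Fin k)
  /-- Gaussian sources for the initial ensemble -/
  g : Fin N → Ω → H
  /-- Gaussian sources for the inflation noises `ξ_j^(n) = √a • Hob† (ζ_j^(n))` -/
  ζ : ℕ → Fin N → Ω → EuclideanSpace ℝ (Fin k)
  /-- a square root of `C0` -/
  sqrtC0 : H →L[ℝ] H
  /-- analysis ensembles (`U 0` is the initial ensemble) -/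
  U : ℕ → Fin N → Ω → H
  /-- prediction ensembles -/
  v : ℕ → Fin N → Ω → H
  /-- prediction means `μ̂_j` -/
  μpred : ℕ → Ω → H
  /-- prediction covariances `Σ̂_j` -/
  Spred : ℕ → Ω → H →L[ℝ] H
  /-- analysis means `m̂_j` -/
  mhat : ℕ → Ω → H
  /-- analysis covariances `Ĉ_j` -/
  Chat : ℕ → Ω → H →L[ℝ] H
  hη_meas : ∀ j, Measurable (η j)
  hη_L2 : ∀ j, MemLp (η j) 2 μ
  hη_mean : ∀ j, ∫ ω, η j ω ∂μ = 0
  hη_cov : ∀ j, ∫ ω, outer (η j ω) (η j ω) ∂μ = R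
  hg_meas : ∀ n, Measurable (g n)
  hg_law : ∀ n, Measure.map (g n) μ = stdGaussian H
  hζ_meas : ∀ j n, Measurable (ζ j n)
  hζ_law : ∀ j n, Measure.map (ζ j n) μ = stdGaussian (EuclideanSpace ℝ (Fin k))
  hIndep : iIndepFun (m := noiseMS H k N) (noiseFun g ζ η) μ
  hC0_sa : IsSelfAdjoint C0
  hC0_pos : ∀ x : H, 0 ≤ ⟪C0 x, x⟫
  hsqrt_sa : IsSelfAdjoint sqrtC0
  hsqrt_pos : ∀ x : H, 0 ≤ ⟪sqrtC0 x, x⟫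
  hsqrt_sq : sqrtC0.comp sqrtC0 = C0
  hU0 : ∀ n ω, U 0 n ω = m0 + sqrtC0 (g n ω)
  hv : ∀ j n ω, v (j + 1) n ω
      = Ψpred (Pr (U j n ω)) + Real.sqrt a • (ContinuousLinearMap.adjoint Hob) (ζ (j + 1) n ω)
  hμpred : ∀ j ω, μpred (j + 1) ω = (N : ℝ)⁻¹ • ∑ n, v (j + 1) n ω
  hSpred : ∀ j ω, Spred (j + 1) ω
      = (N : ℝ)⁻¹ • ∑ n, outer (v (j + 1) n ω - μpred (j + 1) ω) (v (j + 1) n ω - μpred (j + 1) ω)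
  hmhat0 : ∀ ω, mhat 0 ω = (N : ℝ)⁻¹ • ∑ n, U 0 n ω
  hmhat_mean : ∀ j ω, mhat (j + 1) ω = (N : ℝ)⁻¹ • ∑ n, U (j + 1) n ω
  hmhat_analysis : ∀ j ω, mhat (j + 1) ω = μpred (j + 1) ω
      + kalmanGain Hob R ε (Spred (j + 1) ω)
          ((Hob (u (j + 1)) + ε • η (j + 1) ω) - Hob (μpred (j + 1) ω))
  hChat_emp : ∀ j ω, Chat j ω
      = ((N : ℝ) - 1)⁻¹ • ∑ n, outer (U j n ω - mhat j ω) (U j n ω - mhat j ω)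
  hChat_analysis : ∀ j ω, Chat (j + 1) ω
      = ((ContinuousLinearMap.id ℝ H)
          - (kalmanGain Hob R ε (Spred (j + 1) ω)).comp Hob).comp (Spred (j + 1) ω)
  hAdapted : ∀ j n, @Measurable Ω H (enkfFiltration Hob u ε g ζ η j) _ (U j n)

/-- The mean-field (Gaussian projected) filter, Algorithm 3, driven by an observation
sequence `y`, with prediction map `Ψpred`, ball projection `Pr`, inflation `Q = a • P`
and noise level `ε`; `sqrtC j` is the positive self-adjoint square root of `C j`. -/
def IsMeanFieldRun [MeasurableSpace H] [BorelSpace H]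
    (Hob : H →L[ℝ] EuclideanSpace ℝ (Fin k))
    (Ψpred Pr : H → H)
    (R : EuclideanSpace ℝ (Fin k) →L[ℝ] EuclideanSpace ℝ (Fin k)) (a ε : ℝ)
    (y : ℕ → EuclideanSpace ℝ (Fin k))
    (m : ℕ → H) (C : ℕ → H →L[ℝ] H) (μm : ℕ → H) (Sm : ℕ → H →L[ℝ] H)
    (sqrtC : ℕ → H →L[ℝ] H) : Prop :=
  (∀ j, IsSelfAdjoint (C j)) ∧ (∀ j, ∀ x : H, 0 ≤ ⟪C j x, x⟫) ∧
  (∀ j, IsSelfAdjoint (sqrtC j)) ∧ (∀ j, ∀ x : H, 0 ≤ ⟪sqrtC j x, x⟫) ∧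
  (∀ j, (sqrtC j).comp (sqrtC j) = C j) ∧
  (∀ j, μm (j + 1) = ∫ x, Ψpred (Pr x) ∂(gaussianOf (m j) (sqrtC j))) ∧
  (∀ j, Sm (j + 1) = ∫ x, outer (Ψpred (Pr x) - μm (j + 1)) (Ψpred (Pr x) - μm (j + 1))
      ∂(gaussianOf (m j) (sqrtC j))) ∧
  (∀ j, m (j + 1) = μm (j + 1)
      + kalmanGain Hob R ε (Sm (j + 1) + a • Pop Hob) (y (j + 1) - Hob (μm (j + 1)))) ∧
  (∀ j, C (j + 1) = ((ContinuousLinearMap.id ℝ H)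
      - (kalmanGain Hob R ε (Sm (j + 1) + a • Pop Hob)).comp Hob).comp
        (Sm (j + 1) + a • Pop Hob))

end EnKF

namespace EnKF


private lemma trace_eq_sum_inner' {E : Type*} [NormedAddCommGroup E] [InnerProductSpace ℝ E]
    [FiniteDimensional ℝ E] (T : E →L[ℝ] E) :
    opTrace T = ∑ i, ⟪T (stdOrthonormalBasis ℝ E i), stdOrthonormalBasis ℝ E i⟫ := by
  rw [opTrace, LinearMap.trace_eq_matrix_trace ℝ (stdOrthonormalBasis ℝ E).toBasis, Matrix.trace]
  simp [Matrix.diag, LinearMap.toMatrix_apply, OrthonormalBasis.coe_toBasis,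
    OrthonormalBasis.coe_toBasis_repr_apply, OrthonormalBasis.repr_apply_apply, real_inner_comm]

private lemma opTrace_nonneg' {E : Type*} [NormedAddCommGroup E] [InnerProductSpace ℝ E]
    [FiniteDimensional ℝ E] (T : E →L[ℝ] E) (h : ∀ x : E, 0 ≤ ⟪T x, x⟫) : 0 ≤ opTrace T := by
  rw [trace_eq_sum_inner' T]
  exact Finset.sum_nonneg fun i _ => h _

private lemma isUnit_of_posdef {E : Type*} [NormedAddCommGroup E] [InnerProductSpace ℝ E]
    [FiniteDimensional ℝ E] (B : E →L[ℝ] E) (hpos : ∀ x : E, x ≠ 0 → 0 < ⟪B x, x⟫) :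
    IsUnit B := by
  have hinj : Function.Injective B := by
    intro x y hxy
    by_contra hne
    have h := hpos (x - y) (sub_ne_zero.mpr hne)
    rw [map_sub, hxy, sub_self] at h
    simp at h
  have hbij : Function.Bijective B.toLinearMap :=
    ⟨hinj, (LinearMap.injective_iff_surjective).mp hinj⟩
  let e : E ≃L[ℝ] E := (LinearEquiv.ofBijective B.toLinearMap hbij).toContinuousLinearEquiv
  have he : (e : E →L[ℝ] E) = B := by ext x; rfl
  exact ⟨⟨B, (e.symm : E →L[ℝ] E), by rw [← he]; ext x; simp, by rw [← he]; ext x; simp⟩, rfl⟩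

/-- **Kalman analysis covariance is dominated by the noise covariance.**
For a positive semidefinite self-adjoint `Σ`, positive definite `R` and `ε > 0`, with
`K = Σ Hob† (Hob Σ Hob† + ε² R)⁻¹` and `C = (id − K Hob) Σ`, the operator
`ε² R − Hob C Hob†` is positive semidefinite; in particular
`Tr(Hob C Hob†) ≤ ε² Tr(R)`. -/
theorem kalman_analysis_cov_le_noise_cov
    {H : Type*} [NormedAddCommGroup H] [InnerProductSpace ℝ H] [FiniteDimensional ℝ H]
    {k : ℕ} (Hob : H →L[ℝ] EuclideanSpace ℝ (Fin k))
    (hHob : Hob.comp (ContinuousLinearMap.adjoint Hob)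
      = ContinuousLinearMap.id ℝ (EuclideanSpace ℝ (Fin k)))
    (Sig : H →L[ℝ] H) (hSig_sa : IsSelfAdjoint Sig) (hSig_pos : ∀ x : H, 0 ≤ ⟪Sig x, x⟫)
    (R : EuclideanSpace ℝ (Fin k) →L[ℝ] EuclideanSpace ℝ (Fin k))
    (hR_sa : IsSelfAdjoint R) (hR_pos : ∀ x : EuclideanSpace ℝ (Fin k), x ≠ 0 → 0 < ⟪R x, x⟫)
    (ε : ℝ) (hε : 0 < ε)
    (C : H →L[ℝ] H)
    (hC : C = ((ContinuousLinearMap.id ℝ H) - (kalmanGain Hob R ε Sig).comp Hob).comp Sig) :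
    (∀ x : EuclideanSpace ℝ (Fin k),
        0 ≤ ⟪(ε ^ 2 • R - Hob.comp (C.comp (ContinuousLinearMap.adjoint Hob))) x, x⟫) ∧
      opTrace (Hob.comp (C.comp (ContinuousLinearMap.adjoint Hob))) ≤ ε ^ 2 * opTrace R := by
  set A : EuclideanSpace ℝ (Fin k) →L[ℝ] EuclideanSpace ℝ (Fin k) :=
    Hob.comp (Sig.comp (ContinuousLinearMap.adjoint Hob)) with hA
  set B : EuclideanSpace ℝ (Fin k) →L[ℝ] EuclideanSpace ℝ (Fin k) := A + ε ^ 2 • R with hB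
  have hA_pos : ∀ x : EuclideanSpace ℝ (Fin k), 0 ≤ ⟪A x, x⟫ := by
    intro x
    have : ⟪A x, x⟫ = ⟪Sig ((ContinuousLinearMap.adjoint Hob) x),
        (ContinuousLinearMap.adjoint Hob) x⟫ := by
      rw [hA]
      simp only [ContinuousLinearMap.comp_apply]
      rw [← ContinuousLinearMap.adjoint_inner_right]
    rw [this]; exact hSig_pos _
  have hB_posdef : ∀ x : EuclideanSpace ℝ (Fin k), x ≠ 0 → 0 < ⟪B x, x⟫ := by
    intro x hx
    have h1 : ⟪B x, x⟫ = ⟪A x, x⟫ + ε ^ 2 * ⟪R x, x⟫ := by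
      rw [hB, ContinuousLinearMap.add_apply, inner_add_left, ContinuousLinearMap.smul_apply,
        real_inner_smul_left]
    rw [h1]
    have h2 := mul_pos (pow_pos hε 2) (hR_pos x hx)
    have h3 := hA_pos x
    linarith
  have hB_pos : ∀ x : EuclideanSpace ℝ (Fin k), 0 ≤ ⟪B x, x⟫ := by
    intro x
    rcases eq_or_ne x 0 with rfl | hx
    · simp
    · exact (hB_posdef x hx).le
  have hD_sa : IsSelfAdjoint (ε ^ 2 • R) := by
    rw [ContinuousLinearMap.isSelfAdjoint_iff', map_smulₛₗ]
    simp [hR_sa.adjoint_eq]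
  have hB_sa : IsSelfAdjoint B := by
    have hA_sa : IsSelfAdjoint A := by
      rw [ContinuousLinearMap.isSelfAdjoint_iff', hA,
        ContinuousLinearMap.adjoint_comp, ContinuousLinearMap.adjoint_comp,
        ContinuousLinearMap.adjoint_adjoint, hSig_sa.adjoint_eq]
      rfl
    exact (ContinuousLinearMap.isSelfAdjoint_iff').mpr (by rw [hB, map_add, (ContinuousLinearMap.isSelfAdjoint_iff').mp hA_sa, (ContinuousLinearMap.isSelfAdjoint_iff').mp hD_sa])
  have hu : IsUnit B := isUnit_of_posdef B hB_posdef
  set N : EuclideanSpace ℝ (Fin k) →L[ℝ] EuclideanSpace ℝ (Fin k) := Ring.inverse B with hN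
  have hBN : B * N = 1 := Ring.mul_inverse_cancel B hu
  have hNB : N * B = 1 := Ring.inverse_mul_cancel B hu
  have hN_pos : ∀ y : EuclideanSpace ℝ (Fin k), 0 ≤ ⟪N y, y⟫ := by
    intro y
    have hy : B (N y) = y := by
      have := congrArg (fun T : EuclideanSpace ℝ (Fin k) →L[ℝ] EuclideanSpace ℝ (Fin k) => T y) hBN
      simpa [ContinuousLinearMap.mul_apply] using this
    calc (0 : ℝ) ≤ ⟪B (N y), N y⟫ := hB_pos _
      _ = ⟪N y, y⟫ := by rw [hy, real_inner_comm]
  -- identify the operator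
  have hT : Hob.comp (C.comp (ContinuousLinearMap.adjoint Hob)) = A - A * N * A := by
    rw [hC]
    ext x
    simp [kalmanGain, hA, hB, hN, ContinuousLinearMap.mul_apply,
      ContinuousLinearMap.comp_apply, ContinuousLinearMap.sub_apply, map_sub]
  have hD : ε ^ 2 • R = B - A := by rw [hB]; abel
  have key : ε ^ 2 • R - (A - A * N * A) = (ε ^ 2 • R) * N * (ε ^ 2 • R) := by
    rw [hD]
    have h1 : (B - A) * N = 1 - A * N := by rw [sub_mul, hBN]
    rw [h1, sub_mul, one_mul, mul_sub, mul_assoc A N B, hNB, mul_one]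
  have hpsd : ∀ x : EuclideanSpace ℝ (Fin k),
      0 ≤ ⟪((ε ^ 2 • R) * N * (ε ^ 2 • R)) x, x⟫ := by
    intro x
    have h1 : ⟪((ε ^ 2 • R) * N * (ε ^ 2 • R)) x, x⟫
        = ⟪N ((ε ^ 2 • R) x), (ε ^ 2 • R) x⟫ := by
      simp only [ContinuousLinearMap.mul_apply]
      nth_rewrite 1 [← hD_sa.adjoint_eq]
      rw [ContinuousLinearMap.adjoint_inner_left]
    rw [h1]
    exact hN_pos _
  have hmain : ∀ x : EuclideanSpace ℝ (Fin k),
      0 ≤ ⟪(ε ^ 2 • R - Hob.comp (C.comp (ContinuousLinearMap.adjoint Hob))) x, x⟫ := by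
    intro x
    rw [hT, key]
    exact hpsd x
  refine ⟨hmain, ?_⟩
  have h0 : 0 ≤ opTrace (ε ^ 2 • R - Hob.comp (C.comp (ContinuousLinearMap.adjoint Hob))) :=
    opTrace_nonneg' _ hmain
  have hlin : opTrace (ε ^ 2 • R - Hob.comp (C.comp (ContinuousLinearMap.adjoint Hob)))
      = ε ^ 2 * opTrace R - opTrace (Hob.comp (C.comp (ContinuousLinearMap.adjoint Hob))) := by
    simp only [opTrace, ContinuousLinearMap.coe_sub, ContinuousLinearMap.coe_smul,
      map_sub, _root_.map_smul, smul_eq_mul]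
  linarith [hlin ▸ h0]


end EnKF
end
end

section
/- Lemma (the inflated Kalman gain is small on the unobserved subspace). Let Σ be a positive semidefinite self-adjoint operator on H, let R be a symmetric positive semidefinite k×k matrix, let ε ≥ 0 and a > 0, and set Q := a·P. Then Hob(Σ + Q)Hob† + ε²R is invertible and ‖(id − P) ∘ (Σ + Q) ∘ Hob† ∘ (Hob(Σ + Q)Hob† + ε²R)⁻¹‖_op ≤ ‖Σ‖_op / a, where ‖·‖_op denotes the operator norm. -/
/- Common setting for "Long-time accuracy of ensemble Kalman filters". -/

open MeasureTheory ProbabilityTheory Filter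
open scoped RealInnerProductSpace ENNReal NNReal

noncomputable section

namespace EnKF

set_option maxHeartbeats 1600000 in
/-- **The inflated Kalman gain is small on the unobserved subspace.**
For positive semidefinite self-adjoint `Σ`, positive semidefinite `R`, `ε ≥ 0`, `a > 0`
and `Q = a P`, the operator `Hob (Σ + Q) Hob† + ε² R` is invertible and
`‖(id − P) (Σ + Q) Hob† (Hob (Σ + Q) Hob† + ε² R)⁻¹‖ ≤ ‖Σ‖ / a`. -/
theorem inflated_kalman_gain_unobserved_bound
    {H : Type*} [NormedAddCommGroup H] [InnerProductSpace ℝ H] [FiniteDimensional ℝ H]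
    {k : ℕ} (Hob : H →L[ℝ] EuclideanSpace ℝ (Fin k))
    (hHob : Hob.comp (ContinuousLinearMap.adjoint Hob)
      = ContinuousLinearMap.id ℝ (EuclideanSpace ℝ (Fin k)))
    (Sig : H →L[ℝ] H) (hSig_sa : IsSelfAdjoint Sig) (hSig_pos : ∀ x : H, 0 ≤ ⟪Sig x, x⟫)
    (R : EuclideanSpace ℝ (Fin k) →L[ℝ] EuclideanSpace ℝ (Fin k))
    (hR_sa : IsSelfAdjoint R) (hR_pos : ∀ x : EuclideanSpace ℝ (Fin k), 0 ≤ ⟪R x, x⟫)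
    (ε a : ℝ) (hε : 0 ≤ ε) (ha : 0 < a) :
    IsUnit (Hob.comp ((Sig + a • Pop Hob).comp (ContinuousLinearMap.adjoint Hob)) + ε ^ 2 • R) ∧
      ‖((ContinuousLinearMap.id ℝ H - Pop Hob).comp
          ((Sig + a • Pop Hob).comp ((ContinuousLinearMap.adjoint Hob).comp
            (Ring.inverse (Hob.comp ((Sig + a • Pop Hob).comp
              (ContinuousLinearMap.adjoint Hob)) + ε ^ 2 • R)))))‖
        ≤ ‖Sig‖ / a := by
  set A := ContinuousLinearMap.adjoint Hob with hA
  set T := Hob.comp ((Sig + a • Pop Hob).comp A) + ε ^ 2 • R with hT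
  -- P ∘ P = P and related identities
  have hPP : (Pop Hob).comp (Pop Hob) = Pop Hob := by
    simp only [Pop, ← hA, ContinuousLinearMap.comp_assoc]
    rw [← ContinuousLinearMap.comp_assoc Hob, hHob, ContinuousLinearMap.id_comp]
  have hHobA : ∀ y, Hob (A y) = y := fun y =>
    congrFun (congrArg DFunLike.coe hHob) y
  have hHPA : ∀ y, Hob (Pop Hob (A y)) = y := by
    intro y
    simp only [Pop, ← hA, ContinuousLinearMap.comp_apply, hHobA]
  -- norm of adjoint is isometric
  have hAnorm : ∀ y, ‖A y‖ = ‖y‖ := by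
    intro y
    have h1 : ⟪A y, A y⟫ = ⟪y, y⟫ := by
      rw [hA, ContinuousLinearMap.adjoint_inner_left, hHobA]
    rw [real_inner_self_eq_norm_sq, real_inner_self_eq_norm_sq] at h1
    calc ‖A y‖ = Real.sqrt (‖A y‖ ^ 2) := (Real.sqrt_sq (norm_nonneg _)).symm
      _ = Real.sqrt (‖y‖ ^ 2) := by rw [h1]
      _ = ‖y‖ := Real.sqrt_sq (norm_nonneg _)
  -- coercivity of T
  have hcoer : ∀ x, a * ‖x‖ ^ 2 ≤ ⟪T x, x⟫ := by
    intro x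
    have hTx : T x = Hob (Sig (A x)) + a • Hob (Pop Hob (A x)) + ε ^ 2 • R x := by
      simp [hT, ContinuousLinearMap.add_apply, ContinuousLinearMap.comp_apply,
        ContinuousLinearMap.smul_apply, map_add, ContinuousLinearMap.map_smul]
    have hSigterm : 0 ≤ ⟪Hob (Sig (A x)), x⟫ := by
      have heq : ⟪Hob (Sig (A x)), x⟫ = ⟪Sig (A x), A x⟫ := by
        rw [hA, ContinuousLinearMap.adjoint_inner_right]
      rw [heq]; exact hSig_pos _
    have hRterm : 0 ≤ ε ^ 2 * ⟪R x, x⟫ := mul_nonneg (sq_nonneg ε) (hR_pos x)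
    have hmid : ⟪a • Hob (Pop Hob (A x)), x⟫ = a * ‖x‖ ^ 2 := by
      rw [hHPA, real_inner_smul_left, real_inner_self_eq_norm_sq]
    rw [hTx, inner_add_left, inner_add_left, hmid, real_inner_smul_left]
    linarith
  have hlow : ∀ x, a * ‖x‖ ≤ ‖T x‖ := by
    intro x
    rcases eq_or_ne x 0 with rfl | hx
    · simp
    · have h1 := hcoer x
      have h2 : ⟪T x, x⟫ ≤ ‖T x‖ * ‖x‖ := real_inner_le_norm _ _
      have hxpos : 0 < ‖x‖ := norm_pos_iff.mpr hx
      nlinarith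
  -- T is injective hence a unit
  have hinj : Function.Injective T := by
    intro x y hxy
    have h0 : T (x - y) = 0 := by rw [map_sub, hxy, sub_self]
    have := hlow (x - y)
    rw [h0, norm_zero] at this
    have : ‖x - y‖ ≤ 0 := nonpos_of_mul_nonpos_right (le_trans this le_rfl) ha
    have := le_antisymm this (norm_nonneg _)
    rwa [norm_eq_zero, sub_eq_zero] at this
  have hbij : Function.Bijective T :=
    ⟨hinj, LinearMap.injective_iff_surjective.mp hinj⟩
  let e : EuclideanSpace ℝ (Fin k) ≃L[ℝ] EuclideanSpace ℝ (Fin k) :=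
    (LinearEquiv.ofBijective (T : EuclideanSpace ℝ (Fin k) →ₗ[ℝ] EuclideanSpace ℝ (Fin k))
      hbij).toContinuousLinearEquiv
  have hUnit : IsUnit T := ⟨e.toUnit, ContinuousLinearMap.ext fun x => rfl⟩
  refine ⟨hUnit, ?_⟩
  -- inverse properties
  have hTinv : ∀ y, T (Ring.inverse T y) = y := by
    intro y
    have := Ring.mul_inverse_cancel T hUnit
    calc T (Ring.inverse T y) = (T * Ring.inverse T) y := rfl
      _ = y := by rw [this]; rfl
  have hinvnorm : ∀ y, ‖Ring.inverse T y‖ ≤ a⁻¹ * ‖y‖ := by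
    intro y
    have := hlow (Ring.inverse T y)
    rw [hTinv] at this
    rw [← le_div_iff₀' ha] at this
    rwa [div_eq_inv_mul] at this
  -- the unobserved part of Σ + aP is just that of Σ
  have hIPx : ∀ x : H, ‖(ContinuousLinearMap.id ℝ H - Pop Hob) x‖ ≤ ‖x‖ := by
    intro x
    have hPx : ⟪x, Pop Hob x⟫ = ‖Hob x‖ ^ 2 := by
      rw [Pop, ContinuousLinearMap.comp_apply, ← hA, hA,
        ContinuousLinearMap.adjoint_inner_right, real_inner_self_eq_norm_sq]
    have hPx2 : ‖Pop Hob x‖ = ‖Hob x‖ := by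
      rw [Pop, ContinuousLinearMap.comp_apply, ← hA, hAnorm]
    have hsq : ‖x - Pop Hob x‖ ^ 2 = ‖x‖ ^ 2 - ‖Hob x‖ ^ 2 := by
      rw [norm_sub_sq_real, hPx, hPx2]; ring
    have h1 : ‖x - Pop Hob x‖ ^ 2 ≤ ‖x‖ ^ 2 := by
      rw [hsq]; nlinarith [sq_nonneg ‖Hob x‖]
    have h2 : ‖x - Pop Hob x‖ ≤ ‖x‖ := by
      calc ‖x - Pop Hob x‖ = Real.sqrt (‖x - Pop Hob x‖ ^ 2) :=
            (Real.sqrt_sq (norm_nonneg _)).symm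
        _ ≤ Real.sqrt (‖x‖ ^ 2) := Real.sqrt_le_sqrt h1
        _ = ‖x‖ := Real.sqrt_sq (norm_nonneg _)
    simpa only [ContinuousLinearMap.sub_apply, ContinuousLinearMap.id_apply] using h2
  -- kill the aP term
  have hkill : (ContinuousLinearMap.id ℝ H - Pop Hob).comp (Sig + a • Pop Hob)
      = (ContinuousLinearMap.id ℝ H - Pop Hob).comp Sig := by
    ext x
    have hPPx : Pop Hob (Pop Hob x) = Pop Hob x :=
      congrFun (congrArg DFunLike.coe hPP) x
    simp only [ContinuousLinearMap.comp_apply, ContinuousLinearMap.add_apply,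
      ContinuousLinearMap.sub_apply, ContinuousLinearMap.id_apply,
      ContinuousLinearMap.smul_apply, map_add, ContinuousLinearMap.map_smul, hPPx]
    abel
  -- main bound
  refine ContinuousLinearMap.opNorm_le_bound _ (div_nonneg (norm_nonneg _) ha.le) ?_
  intro y
  have hre : ((ContinuousLinearMap.id ℝ H - Pop Hob).comp
      ((Sig + a • Pop Hob).comp (A.comp (Ring.inverse T)))) y
      = (ContinuousLinearMap.id ℝ H - Pop Hob) (Sig (A (Ring.inverse T y))) := by
    have := congrArg (fun (G : H →L[ℝ] H) => G (A (Ring.inverse T y))) hkill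
    simpa [ContinuousLinearMap.comp_apply] using this
  rw [hre]
  calc ‖(ContinuousLinearMap.id ℝ H - Pop Hob) (Sig (A (Ring.inverse T y)))‖
      ≤ ‖Sig (A (Ring.inverse T y))‖ := hIPx _
    _ ≤ ‖Sig‖ * ‖A (Ring.inverse T y)‖ := Sig.le_opNorm _
    _ = ‖Sig‖ * ‖Ring.inverse T y‖ := by rw [hAnorm]
    _ ≤ ‖Sig‖ * (a⁻¹ * ‖y‖) := by
        exact mul_le_mul_of_nonneg_left (hinvnorm y) (norm_nonneg _)
    _ = ‖Sig‖ / a * ‖y‖ := by rw [div_eq_mul_inv]; ring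

end EnKF
end
end

section
/- Lemma (one-step synchronization contraction). Let K : ℝ^k → H be a linear map and ρ ≥ 0 be such that V((P − K ∘ Hob)(x)) ≤ ρ·V(x) for all x ∈ H. Then for every w ∈ H and every u ∈ B: V((id − K ∘ Hob)(Ψ(Π(w)) − Ψ(u))) ≤ (√α + ρ·√L) · V(w − u). -/
/- Common setting for "Long-time accuracy of ensemble Kalman filters". -/

open MeasureTheory ProbabilityTheory Filter
open scoped RealInnerProductSpace ENNReal NNReal

noncomputable section

namespace EnKF

lemma Vnorm_nonneg' {H : Type*} [NormedAddCommGroup H] [InnerProductSpace ℝ H]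
    [FiniteDimensional ℝ H] {k : ℕ} (Hob : H →L[ℝ] EuclideanSpace ℝ (Fin k)) (β : ℝ) (u : H) :
    0 ≤ Vnorm Hob β u := Real.sqrt_nonneg _

lemma Vnorm_sq' {H : Type*} [NormedAddCommGroup H] [InnerProductSpace ℝ H]
    [FiniteDimensional ℝ H] {k : ℕ} (Hob : H →L[ℝ] EuclideanSpace ℝ (Fin k)) {β : ℝ}
    (hβ : 0 ≤ β) (u : H) :
    Vnorm Hob β u ^ 2 = ‖u‖ ^ 2 + β * ‖Pop Hob u‖ ^ 2 :=
  Real.sq_sqrt (by positivity)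

lemma Vnorm_triangle' {H : Type*} [NormedAddCommGroup H] [InnerProductSpace ℝ H]
    [FiniteDimensional ℝ H] {k : ℕ} (Hob : H →L[ℝ] EuclideanSpace ℝ (Fin k)) {β : ℝ}
    (hβ : 0 ≤ β) (x y : H) :
    Vnorm Hob β (x + y) ≤ Vnorm Hob β x + Vnorm Hob β y := by
  have hx := Vnorm_nonneg' Hob β x
  have hy := Vnorm_nonneg' Hob β y
  set a1 := ‖x‖ with ha1
  set b1 := ‖Pop Hob x‖ with hb1
  set a2 := ‖y‖ with ha2
  set b2 := ‖Pop Hob y‖ with hb2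
  have ha : ‖x + y‖ ≤ a1 + a2 := norm_add_le x y
  have hb : ‖Pop Hob (x + y)‖ ≤ b1 + b2 := by
    rw [map_add]; exact norm_add_le _ _
  have ha2' : ‖x + y‖ ^ 2 ≤ (a1 + a2) ^ 2 := by
    apply pow_le_pow_left₀ (norm_nonneg _) ha
  have hb2' : ‖Pop Hob (x + y)‖ ^ 2 ≤ (b1 + b2) ^ 2 := by
    apply pow_le_pow_left₀ (norm_nonneg _) hb
  have hVx := Vnorm_sq' Hob hβ x
  have hVy := Vnorm_sq' Hob hβ y
  have hprodnn : 0 ≤ a1 * a2 + β * (b1 * b2) := by positivity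
  have h1 : a1 * a2 + β * (b1 * b2) ≤ Vnorm Hob β x * Vnorm Hob β y := by
    have hVxVy : Vnorm Hob β x * Vnorm Hob β y
        = Real.sqrt ((a1 ^ 2 + β * b1 ^ 2) * (a2 ^ 2 + β * b2 ^ 2)) := by
      unfold Vnorm
      rw [← Real.sqrt_mul (by positivity)]
    rw [hVxVy]
    rw [show a1 * a2 + β * (b1 * b2)
        = Real.sqrt ((a1 * a2 + β * (b1 * b2)) ^ 2) from (Real.sqrt_sq hprodnn).symm]
    apply Real.sqrt_le_sqrt
    nlinarith [sq_nonneg (a1 * b2 - a2 * b1), mul_nonneg hβ (sq_nonneg (a1 * b2 - a2 * b1))]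
  have key : ‖x + y‖ ^ 2 + β * ‖Pop Hob (x + y)‖ ^ 2
      ≤ (Vnorm Hob β x + Vnorm Hob β y) ^ 2 := by
    nlinarith [mul_le_mul_of_nonneg_left hb2' hβ]
  calc Vnorm Hob β (x + y)
      = Real.sqrt (‖x + y‖ ^ 2 + β * ‖Pop Hob (x + y)‖ ^ 2) := rfl
    _ ≤ Real.sqrt ((Vnorm Hob β x + Vnorm Hob β y) ^ 2) := Real.sqrt_le_sqrt key
    _ = Vnorm Hob β x + Vnorm Hob β y := Real.sqrt_sq (add_nonneg hx hy)

lemma sq_le_aux {a b c : ℝ} (ha : 0 ≤ a) (hb : 0 ≤ b) (hc : 0 ≤ c)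
    (h : a ^ 2 ≤ c * b ^ 2) : a ≤ Real.sqrt c * b := by
  rw [← Real.sqrt_sq ha]
  calc Real.sqrt (a ^ 2) ≤ Real.sqrt (c * b ^ 2) := Real.sqrt_le_sqrt h
    _ = Real.sqrt c * b := by rw [Real.sqrt_mul hc, Real.sqrt_sq hb]

/-- **One-step synchronization contraction.** Under Assumption 1, if `K : ℝᵏ → H` is a
linear map with `V((P − K Hob) x) ≤ ρ V(x)` for all `x`, then for every `w ∈ H` and every
`u` in the absorbing ball,
`V((id − K Hob)(Ψ(Π(w)) − Ψ(u))) ≤ (√α + ρ √L) V(w − u)`. -/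
theorem one_step_synchronization_contraction
    {H : Type*} [NormedAddCommGroup H] [InnerProductSpace ℝ H] [FiniteDimensional ℝ H]
    {k : ℕ} (Hob : H →L[ℝ] EuclideanSpace ℝ (Fin k))
    (β r L α : ℝ) (Ψ Pr : H → H)
    (A1 : Assumption1 Hob β r Ψ Pr L α)
    (K : EuclideanSpace ℝ (Fin k) →L[ℝ] H) (ρ : ℝ) (hρ : 0 ≤ ρ)
    (hK : ∀ x : H, Vnorm Hob β ((Pop Hob - K.comp Hob) x) ≤ ρ * Vnorm Hob β x) :
    ∀ w u : H, ‖u‖ ≤ r →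
      Vnorm Hob β (((ContinuousLinearMap.id ℝ H) - K.comp Hob) (Ψ (Pr w) - Ψ u))
        ≤ (Real.sqrt α + ρ * Real.sqrt L) * Vnorm Hob β (w - u) := by
  intro w u hu
  have hβ := A1.hβ
  set e := Ψ (Pr w) - Ψ u with he
  have hPrw : ‖Pr w‖ ≤ r := A1.hPrB w
  have hV1 : Vnorm Hob β (e - Pop Hob e)
      ≤ Real.sqrt α * Vnorm Hob β (Pr w - u) :=
    sq_le_aux (Vnorm_nonneg' _ _ _) (Vnorm_nonneg' _ _ _) A1.hα0.le
      (A1.hSqueeze (Pr w) u hPrw hu)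
  have hVe : Vnorm Hob β e ≤ Real.sqrt L * Vnorm Hob β (Pr w - u) :=
    sq_le_aux (Vnorm_nonneg' _ _ _) (Vnorm_nonneg' _ _ _) A1.hL.le
      (A1.hLip (Pr w) u hPrw hu)
  have hV2 : Vnorm Hob β ((Pop Hob - K.comp Hob) e) ≤ ρ * Vnorm Hob β e := hK e
  have split : ((ContinuousLinearMap.id ℝ H) - K.comp Hob) e
      = (e - Pop Hob e) + ((Pop Hob - K.comp Hob) e) := by
    simp only [ContinuousLinearMap.sub_apply, ContinuousLinearMap.id_apply,
      ContinuousLinearMap.comp_apply]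
    abel
  have hPr : Vnorm Hob β (Pr w - u) ≤ Vnorm Hob β (w - u) := by
    have h := A1.hPrNonexp w u
    rwa [A1.hPrId u hu] at h
  calc Vnorm Hob β (((ContinuousLinearMap.id ℝ H) - K.comp Hob) e)
      = Vnorm Hob β ((e - Pop Hob e) + ((Pop Hob - K.comp Hob) e)) := by rw [split]
    _ ≤ Vnorm Hob β (e - Pop Hob e) + Vnorm Hob β ((Pop Hob - K.comp Hob) e) :=
        Vnorm_triangle' Hob hβ _ _
    _ ≤ Real.sqrt α * Vnorm Hob β (Pr w - u)
        + ρ * (Real.sqrt L * Vnorm Hob β (Pr w - u)) :=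
        add_le_add hV1 (hV2.trans (mul_le_mul_of_nonneg_left hVe hρ))
    _ = (Real.sqrt α + ρ * Real.sqrt L) * Vnorm Hob β (Pr w - u) := by ring
    _ ≤ (Real.sqrt α + ρ * Real.sqrt L) * Vnorm Hob β (w - u) :=
        mul_le_mul_of_nonneg_left hPr (by positivity)

end EnKF
end
end

section
/- Lemma (squeezing of the pushforward covariance on the unobserved subspace, mean-field version). Let μ be a Borel probability measure on H with finite second moment, mean m and covariance operator C. Let Σ' be the covariance operator of the pushforward of μ under the map u ↦ Ψ(Π(u)). Then Tr((id − P) Σ' (id − P)) ≤ α · ( Tr(C) + β · Tr(Hob C Hob†) ). -/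
/- Common setting for "Long-time accuracy of ensemble Kalman filters". -/

open MeasureTheory ProbabilityTheory Filter
open scoped RealInnerProductSpace ENNReal NNReal

noncomputable section

namespace EnKF


section helpers

variable {H : Type*} [NormedAddCommGroup H] [InnerProductSpace ℝ H] [FiniteDimensional ℝ H]

set_option linter.unusedSectionVars false

lemma outer_apply (u v x : H) : outer u v x = ⟪v, x⟫ • u := rfl

lemma opTrace_outer (u v : H) : opTrace (outer u v) = ⟪v, u⟫ := by
  have h : (outer u v).toLinearMap
      = dualTensorHom ℝ H H (((innerSL ℝ v : H →L[ℝ] ℝ) : H →ₗ[ℝ] ℝ) ⊗ₜ[ℝ] u) := by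
    ext x; simp [outer_apply]
  rw [opTrace, h, LinearMap.trace_eq_contract_apply]
  simp

lemma norm_outer (u v : H) : ‖outer u v‖ = ‖v‖ * ‖u‖ := by
  rw [outer, ContinuousLinearMap.norm_smulRight_apply, innerSL_apply_norm]

variable {F : Type*} [NormedAddCommGroup F] [InnerProductSpace ℝ F] [FiniteDimensional ℝ F]

lemma comp_outer_comp (T : H →L[ℝ] F) (u v : H) :
    T.comp ((outer u v).comp (ContinuousLinearMap.adjoint T)) = outer (T u) (T v) := by
  ext x
  simp [outer_apply, ContinuousLinearMap.adjoint_inner_right, _root_.map_smul,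
    ContinuousLinearMap.adjoint_inner_left]

lemma continuous_outer : Continuous (fun p : H × H => outer p.1 p.2) := by
  have h : (fun p : H × H => outer p.1 p.2)
      = fun p : H × H => ContinuousLinearMap.smulRightL ℝ H H (innerSL ℝ p.2) p.1 := rfl
  rw [h]
  exact (ContinuousLinearMap.smulRightL ℝ H H).continuous₂.comp
    (((innerSL ℝ).continuous.comp continuous_snd).prodMk continuous_fst)

variable {X : Type*} [MeasurableSpace X] {μ : Measure X}

lemma memℒp_two_integrable_norm_sq {f : X → H} (hf : MemLp f 2 μ) :
    Integrable (fun x => ‖f x‖ ^ 2) μ := by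
  have h := hf.integrable_norm_rpow two_ne_zero ENNReal.ofNat_ne_top
  simpa [ENNReal.toReal_ofNat, Real.rpow_natCast] using h

lemma inner_expand [IsProbabilityMeasure μ] {ψ : X → H}
    (h1 : Integrable ψ μ) (h2 : Integrable (fun x => ‖ψ x‖ ^ 2) μ)
    (h0 : ∫ x, ψ x ∂μ = 0) (u : H) :
    ∫ y, ‖u - ψ y‖ ^ 2 ∂μ = ‖u‖ ^ 2 + ∫ y, ‖ψ y‖ ^ 2 ∂μ := by
  have e : ∀ y, ‖u - ψ y‖ ^ 2 = (‖u‖ ^ 2 - 2 * ⟪u, ψ y⟫) + ‖ψ y‖ ^ 2 := by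
    intro y; rw [@norm_sub_sq_real]
  have hinner : Integrable (fun y => ⟪u, ψ y⟫) μ := by
    simpa using (innerSL ℝ u).integrable_comp h1
  calc ∫ y, ‖u - ψ y‖ ^ 2 ∂μ
      = ∫ y, ((‖u‖ ^ 2 - 2 * ⟪u, ψ y⟫) + ‖ψ y‖ ^ 2) ∂μ := by simp_rw [e]
    _ = (∫ y, (‖u‖ ^ 2 - 2 * ⟪u, ψ y⟫) ∂μ) + ∫ y, ‖ψ y‖ ^ 2 ∂μ := by
        exact integral_add ((integrable_const _).sub (hinner.const_mul 2)) h2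
    _ = ‖u‖ ^ 2 + ∫ y, ‖ψ y‖ ^ 2 ∂μ := by
        rw [integral_sub (integrable_const _) (hinner.const_mul 2), integral_const]
        simp_rw [← smul_eq_mul]
        rw [integral_smul, integral_inner h1, h0]
        simp

end helpers

set_option maxHeartbeats 1000000 in
/-- **Squeezing of the pushforward covariance on the unobserved subspace (mean-field
version, cf. equation (3.5)).** Under Assumption 1, if `μ` is a Borel probability measure
on `H` with finite second moment, mean `m` and covariance `C`, and `Σ'` is the covariance
of the pushforward of `μ` under `u ↦ Ψ(Π(u))`, then
`Tr((id − P) Σ' (id − P)) ≤ α (Tr(C) + β Tr(Hob C Hob†))`. -/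
theorem pushforward_covariance_squeezing
    {H : Type*} [NormedAddCommGroup H] [InnerProductSpace ℝ H] [FiniteDimensional ℝ H]
    [MeasurableSpace H] [BorelSpace H]
    {k : ℕ} (Hob : H →L[ℝ] EuclideanSpace ℝ (Fin k))
    (β r L α : ℝ) (Ψ Pr : H → H)
    (A1 : Assumption1 Hob β r Ψ Pr L α)
    (hΨmeas : Measurable Ψ) (hPrmeas : Measurable Pr)
    (μ : Measure H) [IsProbabilityMeasure μ]
    (hμL2 : MemLp (fun x : H => x) 2 μ)
    (m : H) (hm : ∫ x, x ∂μ = m)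
    (C : H →L[ℝ] H) (hC : ∫ x, outer (x - m) (x - m) ∂μ = C)
    (m' : H) (hm' : m' = ∫ x, Ψ (Pr x) ∂μ)
    (S' : H →L[ℝ] H) (hS' : S' = ∫ x, outer (Ψ (Pr x) - m') (Ψ (Pr x) - m') ∂μ) :
    opTrace (((ContinuousLinearMap.id ℝ H) - Pop Hob).comp
        (S'.comp ((ContinuousLinearMap.id ℝ H) - Pop Hob)))
      ≤ α * (opTrace C
          + β * opTrace (Hob.comp (C.comp (ContinuousLinearMap.adjoint Hob)))) := by
  classical
  obtain ⟨hHob, hβ, hr, hΨB, hL0, hLip, hα0, hα1, hSq, hPrB, hPrId, hPrNonexp⟩ := A1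
  set P : H →L[ℝ] H := Pop Hob with hPdef
  set Q : H →L[ℝ] H := ContinuousLinearMap.id ℝ H - P with hQdef
  -- basic operator identities
  have hHH : ∀ z, Hob ((ContinuousLinearMap.adjoint Hob) z) = z := by
    intro z
    have := congrArg (fun T : EuclideanSpace ℝ (Fin k) →L[ℝ] EuclideanSpace ℝ (Fin k) => T z) hHob
    simpa using this
  have hPapp : ∀ u, P u = (ContinuousLinearMap.adjoint Hob) (Hob u) := fun u => rfl
  have hPP : ∀ u, P (P u) = P u := by
    intro u; rw [hPapp, hPapp, hHH]
  have hPadj : ContinuousLinearMap.adjoint P = P := by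
    rw [hPdef, Pop, ContinuousLinearMap.adjoint_comp, ContinuousLinearMap.adjoint_adjoint]
  have hQadj : ContinuousLinearMap.adjoint Q = Q := by
    rw [hQdef, map_sub, ContinuousLinearMap.adjoint_id, hPadj]
  have hQapp : ∀ u, Q u = u - P u := fun u => rfl
  have hPQ : ∀ u, P (Q u) = 0 := by
    intro u; rw [hQapp, map_sub, hPP, sub_self]
  have hPsa : ∀ u w : H, ⟪P u, w⟫ = ⟪u, P w⟫ := by
    intro u w
    rw [hPapp, hPapp, ContinuousLinearMap.adjoint_inner_left,
      ContinuousLinearMap.adjoint_inner_right]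
  have hHobnorm : ∀ u : H, ‖Hob u‖ ^ 2 = ‖P u‖ ^ 2 := by
    intro u
    rw [← real_inner_self_eq_norm_sq, ← real_inner_self_eq_norm_sq]
    have h1 : ⟪P u, u⟫ = ⟪Hob u, Hob u⟫ := by
      rw [hPapp]; exact ContinuousLinearMap.adjoint_inner_left Hob u (Hob u)
    have h2 : ⟪P u, P u⟫ = ⟪P u, u⟫ := by
      rw [hPsa, hPP, real_inner_comm]
    rw [h2, h1]
  -- the V-quadratic form
  set W : H → ℝ := fun u => ‖u‖ ^ 2 + β * ‖P u‖ ^ 2 with hWdef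
  have hW0 : ∀ u, 0 ≤ W u := by
    intro u
    exact add_nonneg (sq_nonneg _) (mul_nonneg hβ (sq_nonneg _))
  have hVW : ∀ u, Vnorm Hob β u ^ 2 = W u := by
    intro u; rw [Vnorm, Real.sq_sqrt (hW0 u)]
  -- pointwise squeezing inequality
  have key : ∀ x y : H, ‖Q (Ψ (Pr x) - Ψ (Pr y))‖ ^ 2 ≤ α * W (x - y) := by
    intro x y
    have h1 := hSq (Pr x) (Pr y) (hPrB x) (hPrB y)
    rw [hVW, hVW] at h1
    have h2 : W (Pr x - Pr y) ≤ W (x - y) := by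
      have h3 := hPrNonexp x y
      have h4 : 0 ≤ Vnorm Hob β (Pr x - Pr y) := Real.sqrt_nonneg _
      have := pow_le_pow_left₀ h4 h3 2
      rwa [hVW, hVW] at this
    have e1 : W ((Ψ (Pr x) - Ψ (Pr y)) - Pop Hob (Ψ (Pr x) - Ψ (Pr y)))
        = ‖Q (Ψ (Pr x) - Ψ (Pr y))‖ ^ 2 := by
      rw [hWdef]
      have : (Ψ (Pr x) - Ψ (Pr y)) - Pop Hob (Ψ (Pr x) - Ψ (Pr y))
          = Q (Ψ (Pr x) - Ψ (Pr y)) := (hQapp _).symm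
      rw [this]
      simp [hPQ]
    calc ‖Q (Ψ (Pr x) - Ψ (Pr y))‖ ^ 2
        = W ((Ψ (Pr x) - Ψ (Pr y)) - Pop Hob (Ψ (Pr x) - Ψ (Pr y))) := e1.symm
      _ ≤ α * W (Pr x - Pr y) := h1
      _ ≤ α * W (x - y) := by
          exact mul_le_mul_of_nonneg_left h2 hα0.le
  -- measure-theoretic setup
  set g : H → H := fun x => Ψ (Pr x) with hgdef
  have hgmeas : Measurable g := hΨmeas.comp hPrmeas
  have hgb : ∀ x, ‖g x‖ ≤ r := fun x => hΨB _ (hPrB x)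
  have hg_int : Integrable g μ :=
    Integrable.mono' (integrable_const r) hgmeas.aestronglyMeasurable (ae_of_all _ hgb)
  have hm'g : ∫ x, g x ∂μ = m' := hm'.symm
  set ψ : H → H := fun x => Q (g x) - Q m' with hψdef
  have hψeq : ∀ x, ψ x = Q (g x - m') := by
    intro x; rw [hψdef]; simp [map_sub]
  have hψmeas : Measurable ψ := (Q.continuous.measurable.comp hgmeas).sub_const _
  set Mb : ℝ := ‖Q‖ * (r + ‖m'‖) with hMbdef
  have hψb : ∀ x, ‖ψ x‖ ≤ Mb := by
    intro x
    rw [hψeq]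
    calc ‖Q (g x - m')‖ ≤ ‖Q‖ * ‖g x - m'‖ := Q.le_opNorm _
      _ ≤ ‖Q‖ * (r + ‖m'‖) := by
          apply mul_le_mul_of_nonneg_left _ (norm_nonneg Q)
          exact (norm_sub_le _ _).trans (add_le_add_left (hgb x) _)
  have hψ_int : Integrable ψ μ := (Q.integrable_comp hg_int).sub (integrable_const _)
  have hψsq_int : Integrable (fun x => ‖ψ x‖ ^ 2) μ := by
    refine Integrable.mono' (integrable_const (Mb ^ 2))
      ((hψmeas.norm.pow_const 2).aestronglyMeasurable) (ae_of_all _ fun x => ?_)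
    rw [Real.norm_eq_abs, abs_of_nonneg (sq_nonneg _)]
    exact pow_le_pow_left₀ (norm_nonneg _) (hψb x) 2
  have hψ0 : ∫ x, ψ x ∂μ = 0 := by
    rw [hψdef]
    rw [integral_sub (Q.integrable_comp hg_int) (integrable_const _), integral_const,
      Q.integral_comp_comm hg_int, hm'g]
    simp
  -- centered identity and observed part
  have hid_mem : MemLp (fun x : H => x - m) 2 μ := hμL2.sub (memLp_const m)
  have hid_int : Integrable (fun x : H => x - m) μ := hid_mem.integrable one_le_two
  have hidsq : Integrable (fun x : H => ‖x - m‖ ^ 2) μ := memℒp_two_integrable_norm_sq hid_mem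
  have hid0 : ∫ x, (x - m) ∂μ = 0 := by
    rw [integral_sub (hμL2.integrable one_le_two) (integrable_const m), hm, integral_const]
    simp
  have hPid_mem : MemLp (fun x : H => P (x - m)) 2 μ := by
    exact P.comp_memLp' hid_mem
  have hPid_int : Integrable (fun x : H => P (x - m)) μ := hPid_mem.integrable one_le_two
  have hPidsq : Integrable (fun x : H => ‖P (x - m)‖ ^ 2) μ :=
    memℒp_two_integrable_norm_sq hPid_mem
  have hPid0 : ∫ x, P (x - m) ∂μ = 0 := by
    rw [P.integral_comp_comm hid_int, hid0, map_zero]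
  -- the three constants
  set cψ : ℝ := ∫ x, ‖ψ x‖ ^ 2 ∂μ with hcψdef
  set cA : ℝ := ∫ x, ‖x - m‖ ^ 2 ∂μ with hcAdef
  set cB : ℝ := ∫ x, ‖P (x - m)‖ ^ 2 ∂μ with hcBdef
  have hF : ∀ x, ∫ y, ‖ψ x - ψ y‖ ^ 2 ∂μ = ‖ψ x‖ ^ 2 + cψ :=
    fun x => inner_expand hψ_int hψsq_int hψ0 (ψ x)
  have hA : ∀ u : H, ∫ y, ‖u - (y - m)‖ ^ 2 ∂μ = ‖u‖ ^ 2 + cA :=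
    fun u => inner_expand hid_int hidsq hid0 u
  have hB : ∀ u : H, ∫ y, ‖u - P (y - m)‖ ^ 2 ∂μ = ‖u‖ ^ 2 + cB :=
    fun u => inner_expand hPid_int hPidsq hPid0 u
  -- integral of W over shifted variable
  have hsub_int : ∀ x : H, Integrable (fun y => ‖(x - m) - (y - m)‖ ^ 2) μ :=
    fun x => memℒp_two_integrable_norm_sq ((memLp_const (x - m)).sub hid_mem)
  have hPsub_int : ∀ x : H, Integrable (fun y => ‖P (x - m) - P (y - m)‖ ^ 2) μ :=
    fun x => memℒp_two_integrable_norm_sq ((memLp_const (P (x - m))).sub hPid_mem)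
  have hWexp : ∀ x y : H, W (x - y)
      = ‖(x - m) - (y - m)‖ ^ 2 + β * ‖P (x - m) - P (y - m)‖ ^ 2 := by
    intro x y
    rw [hWdef]
    have e1 : (x - m) - (y - m) = x - y := by abel
    have e2 : P (x - m) - P (y - m) = P (x - y) := by rw [← map_sub, e1]
    rw [e1, e2]
  have hWy_int : ∀ x : H, Integrable (fun y => W (x - y)) μ := by
    intro x
    have := (hsub_int x).add ((hPsub_int x).const_mul β)
    refine this.congr (ae_of_all _ fun y => ?_)
    exact (hWexp x y).symm
  have hWy : ∀ x : H, ∫ y, W (x - y) ∂μ = W (x - m) + (cA + β * cB) := by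
    intro x
    calc ∫ y, W (x - y) ∂μ
        = ∫ y, (‖(x - m) - (y - m)‖ ^ 2 + β * ‖P (x - m) - P (y - m)‖ ^ 2) ∂μ := by
          exact integral_congr_ae (ae_of_all _ fun y => hWexp x y)
      _ = (∫ y, ‖(x - m) - (y - m)‖ ^ 2 ∂μ)
            + ∫ y, β * ‖P (x - m) - P (y - m)‖ ^ 2 ∂μ := by
          exact integral_add (hsub_int x) ((hPsub_int x).const_mul β)
      _ = (‖x - m‖ ^ 2 + cA) + β * (‖P (x - m)‖ ^ 2 + cB) := by
          rw [integral_const_mul, hA (x - m), hB (P (x - m))]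
      _ = W (x - m) + (cA + β * cB) := by rw [hWdef]; ring
  -- pointwise inequality for the iterated integral
  have hψsub : ∀ x y : H, ψ x - ψ y = Q (g x - g y) := by
    intro x y; simp only [hψdef]; rw [map_sub]; abel
  have hFyint : ∀ x : H, Integrable (fun y => ‖ψ x - ψ y‖ ^ 2) μ := by
    intro x
    refine Integrable.mono' (integrable_const ((2 * Mb) ^ 2))
      (((measurable_const.sub hψmeas).norm.pow_const 2).aestronglyMeasurable)
      (ae_of_all _ fun y => ?_)
    rw [Real.norm_eq_abs, abs_of_nonneg (sq_nonneg _)]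
    refine pow_le_pow_left₀ (norm_nonneg _) ?_ 2
    calc ‖ψ x - ψ y‖ ≤ ‖ψ x‖ + ‖ψ y‖ := norm_sub_le _ _
      _ ≤ Mb + Mb := add_le_add (hψb x) (hψb y)
      _ = 2 * Mb := by ring
  have hFle : ∀ x : H, (∫ y, ‖ψ x - ψ y‖ ^ 2 ∂μ) ≤ α * (W (x - m) + (cA + β * cB)) := by
    intro x
    have step : (∫ y, ‖ψ x - ψ y‖ ^ 2 ∂μ) ≤ ∫ y, α * W (x - y) ∂μ := by
      refine integral_mono (hFyint x) ((hWy_int x).const_mul α) fun y => ?_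
      rw [hψsub x y]
      exact key x y
    rw [integral_const_mul, hWy x] at step
    exact step
  -- integrate the inequality in x
  have hFint : Integrable (fun x => ∫ y, ‖ψ x - ψ y‖ ^ 2 ∂μ) μ :=
    (hψsq_int.add (integrable_const cψ)).congr (ae_of_all _ fun x => (hF x).symm)
  have hWm_int : Integrable (fun x => W (x - m)) μ := hidsq.add (hPidsq.const_mul β)
  have hRint : Integrable (fun x => α * (W (x - m) + (cA + β * cB))) μ :=
    (hWm_int.add (integrable_const _)).const_mul α
  have hIneq := integral_mono hFint hRint hFle
  have hLeval : ∫ x, (∫ y, ‖ψ x - ψ y‖ ^ 2 ∂μ) ∂μ = 2 * cψ := by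
    rw [integral_congr_ae (ae_of_all _ hF), integral_add hψsq_int (integrable_const _),
      integral_const]
    simp only [probReal_univ, one_smul]
    rw [← hcψdef]; ring
  have hcW : ∫ x, W (x - m) ∂μ = cA + β * cB := by
    rw [integral_add hidsq (hPidsq.const_mul β), integral_const_mul, ← hcAdef, ← hcBdef]
  have hReval : ∫ x, α * (W (x - m) + (cA + β * cB)) ∂μ = α * (2 * (cA + β * cB)) := by
    rw [integral_const_mul, integral_add hWm_int (integrable_const _), hcW, integral_const]
    simp only [probReal_univ, one_smul]
    ring
  rw [hLeval, hReval] at hIneq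
  have hmain : cψ ≤ α * (cA + β * cB) := by linarith
  -- trace identifications
  have houter_meas : Measurable (fun x : H => outer (g x - m') (g x - m')) := by
    have h1 : Measurable (fun x : H => g x - m') := hgmeas.sub_const _
    exact continuous_outer.measurable.comp (h1.prodMk h1)
  have houter_int : Integrable (fun x : H => outer (g x - m') (g x - m')) μ := by
    refine Integrable.mono' (integrable_const ((r + ‖m'‖) ^ 2))
      houter_meas.aestronglyMeasurable (ae_of_all _ fun x => ?_)
    rw [norm_outer]
    have hb : ‖g x - m'‖ ≤ r + ‖m'‖ := (norm_sub_le _ _).trans (add_le_add_left (hgb x) _)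
    calc ‖g x - m'‖ * ‖g x - m'‖ ≤ (r + ‖m'‖) * (r + ‖m'‖) :=
          mul_le_mul hb hb (norm_nonneg _) (by positivity)
      _ = (r + ‖m'‖) ^ 2 := by ring
  have hCouter_meas : Measurable (fun x : H => outer (x - m) (x - m)) := by
    have h1 : Measurable (fun x : H => x - m) := measurable_id.sub_const _
    exact continuous_outer.measurable.comp (h1.prodMk h1)
  have hCouter_int : Integrable (fun x : H => outer (x - m) (x - m)) μ := by
    refine Integrable.mono' hidsq hCouter_meas.aestronglyMeasurable (ae_of_all _ fun x => ?_)
    exact le_of_eq (by rw [norm_outer, pow_two])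
  let TrQ : (H →L[ℝ] H) →L[ℝ] ℝ := LinearMap.toContinuousLinearMap
    { toFun := fun T => opTrace (Q.comp (T.comp Q))
      map_add' := fun T S => by
        simp [opTrace, ContinuousLinearMap.comp_add, ContinuousLinearMap.add_comp]
      map_smul' := fun c T => by
        simp [opTrace, ContinuousLinearMap.comp_smul, ContinuousLinearMap.smul_comp] }
  have hTrQ_outer : ∀ u : H, TrQ (outer u u) = ‖Q u‖ ^ 2 := by
    intro u
    have h1 := comp_outer_comp Q u u
    rw [hQadj] at h1
    have h0 : TrQ (outer u u) = opTrace (Q.comp ((outer u u).comp Q)) := rfl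
    rw [h0, h1, opTrace_outer, real_inner_self_eq_norm_sq]
  have hTrQS' : opTrace (Q.comp (S'.comp Q)) = cψ := by
    have h0 : opTrace (Q.comp (S'.comp Q)) = TrQ S' := rfl
    rw [h0, hS', ← ContinuousLinearMap.integral_comp_comm TrQ houter_int, hcψdef]
    refine integral_congr_ae (ae_of_all _ fun x => ?_)
    show TrQ (outer (g x - m') (g x - m')) = ‖ψ x‖ ^ 2
    rw [hTrQ_outer, ← hψeq x]
  let TrC : (H →L[ℝ] H) →L[ℝ] ℝ := LinearMap.toContinuousLinearMap
    ((LinearMap.trace ℝ H).comp (ContinuousLinearMap.coeLM ℝ))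
  have hTrC : opTrace C = cA := by
    have h0 : opTrace C = TrC C := rfl
    rw [h0, ← hC, ← ContinuousLinearMap.integral_comp_comm TrC hCouter_int, hcAdef]
    refine integral_congr_ae (ae_of_all _ fun x => ?_)
    show opTrace (outer (x - m) (x - m)) = ‖x - m‖ ^ 2
    rw [opTrace_outer, real_inner_self_eq_norm_sq]
  let TrH : (H →L[ℝ] H) →L[ℝ] ℝ := LinearMap.toContinuousLinearMap
    { toFun := fun T => opTrace (Hob.comp (T.comp (ContinuousLinearMap.adjoint Hob)))
      map_add' := fun T S => by
        simp [opTrace, ContinuousLinearMap.comp_add, ContinuousLinearMap.add_comp]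
      map_smul' := fun c T => by
        simp [opTrace, ContinuousLinearMap.comp_smul, ContinuousLinearMap.smul_comp] }
  have hTrH : opTrace (Hob.comp (C.comp (ContinuousLinearMap.adjoint Hob))) = cB := by
    have h0 : opTrace (Hob.comp (C.comp (ContinuousLinearMap.adjoint Hob))) = TrH C := rfl
    rw [h0, ← hC, ← ContinuousLinearMap.integral_comp_comm TrH hCouter_int, hcBdef]
    refine integral_congr_ae (ae_of_all _ fun x => ?_)
    show opTrace (Hob.comp ((outer (x - m) (x - m)).comp (ContinuousLinearMap.adjoint Hob)))
        = ‖P (x - m)‖ ^ 2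
    rw [comp_outer_comp, opTrace_outer, real_inner_self_eq_norm_sq, hHobnorm]
  calc opTrace (Q.comp (S'.comp Q)) = cψ := hTrQS'
    _ ≤ α * (cA + β * cB) := hmain
    _ = α * (opTrace C
          + β * opTrace (Hob.comp (C.comp (ContinuousLinearMap.adjoint Hob)))) := by
        rw [hTrC, hTrH]




end EnKF
end
end

section
/- Lemma (small-ball property survives truncation). Suppose c > 0 is such that P(|⟨θ, v⟩| ≤ s) ≤ c·s for every unit vector θ ∈ ℝ^k and every s > 0, and suppose E‖v‖² ≤ (11/10)·k. Define the truncated vector ω := min{1, √k/‖v‖}·v (with ω := 0 on the event v = 0). Then for every unit vector θ ∈ ℝ^k and every t > 0 with c·t ≤ 1: P(|⟨θ, ω⟩| ≤ t) ≤ (21/10)·(c·t)^{2/3}. -/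
/-!
Truncating `v` at radius `√k` shrinks `⟪θ, v⟫` by at most a factor `r ≥ 1` on the event
`‖v‖ ≤ r √k`. Hence the small-ball event of the truncated vector lies in the union of
`{‖v‖ > r √k}`, of probability at most `(11/10) r⁻²` by Markov's inequality for `‖v‖²`, and
`{|⟪θ, v⟫| ≤ r t}`, of probability at most `c r t`. Balancing the two with `r = (c t)^(-1/3)`
gives the bound `(21/10) (c t)^(2/3)`.
-/

open MeasureTheory
open scoped RealInnerProductSpace ENNReal

noncomputable section

namespace EnKF

section Truncation

variable {E : Type*} [NormedAddCommGroup E] [InnerProductSpace ℝ E]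

def truncate (ρ : ℝ) (x : E) : E := min 1 (ρ / ‖x‖) • x

lemma abs_inner_le_of_abs_inner_truncate_le {θ x : E} {ρ r t : ℝ} (hρ : 0 < ρ) (hr : 1 ≤ r)
    (hx : ‖x‖ ≤ ρ * r) (h : |⟪θ, truncate ρ x⟫| ≤ t) : |⟪θ, x⟫| ≤ r * t := by
  rcases eq_or_ne x 0 with rfl | hx0
  · simpa using mul_nonneg (by linarith) ((abs_nonneg _).trans h)
  have hscale : r⁻¹ ≤ min 1 (ρ / ‖x‖) := by
    refine le_min (inv_le_one_of_one_le₀ hr) ?_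
    calc r⁻¹ = ρ / (ρ * r) := by field_simp
      _ ≤ ρ / ‖x‖ := div_le_div_of_nonneg_left hρ.le (norm_pos_iff.2 hx0) hx
  have hpos : 0 < min 1 (ρ / ‖x‖) := (inv_pos.2 (by linarith)).trans_le hscale
  rw [truncate, real_inner_smul_right, abs_mul, abs_of_pos hpos] at h
  rw [← inv_mul_le_iff₀ (by linarith)]
  exact (mul_le_mul_of_nonneg_right hscale (abs_nonneg _)).trans h

variable {Ω : Type*} [MeasurableSpace Ω] (μ : Measure Ω) {v : Ω → E}

lemma measure_abs_inner_truncate_le (θ : E) {ρ r t : ℝ} (hρ : 0 < ρ) (hr : 1 ≤ r) :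
    μ {ω | |⟪θ, truncate ρ (v ω)⟫| ≤ t}
      ≤ μ {ω | ρ * r < ‖v ω‖} + μ {ω | |⟪θ, v ω⟫| ≤ r * t} := by
  refine (measure_mono fun ω hω => ?_).trans (measure_union_le _ _)
  by_cases hlarge : ρ * r < ‖v ω‖
  · exact Or.inl hlarge
  · exact Or.inr (abs_inner_le_of_abs_inner_truncate_le hρ hr (not_lt.1 hlarge) hω)

end Truncation

lemma measure_lt_norm_le_lintegral_sq_div {Ω E : Type*} [MeasurableSpace Ω] [NormedAddCommGroup E]
    [MeasurableSpace E] [OpensMeasurableSpace E] (μ : Measure Ω) {v : Ω → E}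
    (hv : AEMeasurable v μ) {R : ℝ} (hR : 0 < R) :
    μ {ω | R < ‖v ω‖} ≤ (∫⁻ ω, ENNReal.ofReal (‖v ω‖ ^ 2) ∂μ) / ENNReal.ofReal (R ^ 2) := by
  calc μ {ω | R < ‖v ω‖}
      ≤ μ {ω | ENNReal.ofReal (R ^ 2) ≤ ENNReal.ofReal (‖v ω‖ ^ 2)} :=
        measure_mono fun ω hω => ENNReal.ofReal_le_ofReal (pow_le_pow_left₀ hR.le hω.le 2)
    _ ≤ _ := meas_ge_le_lintegral_div (hv.norm.pow_const 2).ennreal_ofReal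
        (by positivity) ENNReal.ofReal_ne_top

theorem small_ball_truncation_general {k : ℕ} (hk : 1 ≤ k)
    (Ω : Type*) [MeasurableSpace Ω] (μ : Measure Ω)
    (v : Ω → EuclideanSpace ℝ (Fin k)) (hv : Measurable v)
    (c : ℝ) (hc : 0 < c)
    (hSmallBall : ∀ θ : EuclideanSpace ℝ (Fin k), ‖θ‖ = 1 → ∀ s : ℝ, 0 < s →
      μ {ω | |⟪θ, v ω⟫| ≤ s} ≤ ENNReal.ofReal (c * s))
    (hMoment : ∫⁻ ω, ENNReal.ofReal (‖v ω‖ ^ 2) ∂μ ≤ ENNReal.ofReal ((11 / 10) * k)) :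
    ∀ θ : EuclideanSpace ℝ (Fin k), ‖θ‖ = 1 → ∀ t : ℝ, 0 < t → c * t ≤ 1 →
      μ {ω | |⟪θ, min 1 (Real.sqrt k / ‖v ω‖) • v ω⟫| ≤ t}
        ≤ ENNReal.ofReal ((21 / 10) * (c * t) ^ ((2 : ℝ) / 3)) := by
  intro θ hθ t ht hct
  have hk : (0 : ℝ) < k := by exact_mod_cast hk
  have hct0 : 0 < c * t := mul_pos hc ht
  set a := (c * t) ^ ((1 : ℝ) / 3) with ha_def
  have ha : 0 < a := Real.rpow_pos_of_pos hct0 _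
  have ha3 : a ^ 3 = c * t := by
    rw [ha_def, ← Real.rpow_natCast, ← Real.rpow_mul hct0.le]; norm_num
  have ha23 : (c * t) ^ ((2 : ℝ) / 3) = a ^ 2 := by
    rw [ha_def, ← Real.rpow_natCast, ← Real.rpow_mul hct0.le]; norm_num
  have ha1 : a ≤ 1 := (pow_le_one_iff_of_nonneg ha.le (by norm_num)).1 (ha3.trans_le hct)
  have hr : 1 ≤ a⁻¹ := (one_le_inv₀ ha).2 ha1
  have hsk : 0 < Real.sqrt k := Real.sqrt_pos.2 hk
  calc μ {ω | |⟪θ, truncate (Real.sqrt k) (v ω)⟫| ≤ t}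
      ≤ μ {ω | Real.sqrt k * a⁻¹ < ‖v ω‖} + μ {ω | |⟪θ, v ω⟫| ≤ a⁻¹ * t} :=
        measure_abs_inner_truncate_le μ θ hsk hr
    _ ≤ ENNReal.ofReal ((11 / 10) * k) / ENNReal.ofReal ((Real.sqrt k * a⁻¹) ^ 2)
          + ENNReal.ofReal (c * (a⁻¹ * t)) := by
        gcongr
        · exact (measure_lt_norm_le_lintegral_sq_div μ hv.aemeasurable (by positivity)).trans
            (by gcongr)
        · exact hSmallBall θ hθ _ (by positivity)
    _ = ENNReal.ofReal ((21 / 10) * (c * t) ^ ((2 : ℝ) / 3)) := by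
        rw [← ENNReal.ofReal_div_of_pos (by positivity), ← ENNReal.ofReal_add (by positivity)
          (by positivity), ha23, mul_pow, Real.sq_sqrt hk.le]
        congr 1
        field_simp
        linear_combination (-10) * ha3

/-- **Small-ball property survives truncation.** If the random vector `v` on `ℝᵏ`
satisfies the small-ball estimate `P(|⟪θ, v⟫| ≤ s) ≤ c s` for all unit vectors `θ` and
all `s > 0`, and `E‖v‖² ≤ (11/10) k`, then the truncated vector
`ω = min{1, √k/‖v‖} v` satisfies `P(|⟪θ, ω⟫| ≤ t) ≤ (21/10) (c t)^(2/3)` for all unit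
vectors `θ` and all `t > 0` with `c t ≤ 1`. -/
theorem small_ball_truncation {k : ℕ} (hk : 1 ≤ k)
    (Ω : Type*) [MeasurableSpace Ω] (μ : Measure Ω) [IsProbabilityMeasure μ]
    (v : Ω → EuclideanSpace ℝ (Fin k)) (hv : Measurable v)
    (c : ℝ) (hc : 0 < c)
    (hSmallBall : ∀ θ : EuclideanSpace ℝ (Fin k), ‖θ‖ = 1 → ∀ s : ℝ, 0 < s →
      μ {ω | |⟪θ, v ω⟫| ≤ s} ≤ ENNReal.ofReal (c * s))
    (hMoment : ∫⁻ ω, ENNReal.ofReal (‖v ω‖ ^ 2) ∂μ ≤ ENNReal.ofReal ((11 / 10) * k)) :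
    ∀ θ : EuclideanSpace ℝ (Fin k), ‖θ‖ = 1 → ∀ t : ℝ, 0 < t → c * t ≤ 1 →
      μ {ω | |⟪θ, min 1 (Real.sqrt k / ‖v ω‖) • v ω⟫| ≤ t}
        ≤ ENNReal.ofReal ((21 / 10) * (c * t) ^ ((2 : ℝ) / 3)) :=
  small_ball_truncation_general hk Ω μ v hv c hc hSmallBall hMoment

end EnKF
end
end
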